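/- Let B* be a cooperation bound. In any strongly stable graph g, for every positive integer k < B*, there are at most k + 1 vertices of degree exactly k. Consequently, the number of vertices of degree strictly less than B* is at most B*(B* + 1)/2, a bound independent of the number of vertices. -/
import Mathlib

variable {V : Type*}

/-- Degree of vertex `i` in the simple graph `g`. -/
noncomputable def deg [Fintype V] (g : SimpleGraph V) (i : V) : ℕ :=
  (g.neighborSet i).ncard

/-- Per-period utility of vertex `i` in the graph `g`:
`u_i(g) = α·v·(1 − (1−p)^{d_i(g)}) − Σ_{j ∈ N_i(g)} α·c·(1 − (1−p)^{d_j(g)})/d_j(g)`. -/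
noncomputable def util [Fintype V] (α v c p : ℝ) (g : SimpleGraph V) (i : V) : ℝ :=
  α * v * (1 - (1 - p) ^ deg g i) -
    ∑ j ∈ (g.neighborSet i).toFinite.toFinset,
      α * c * (1 - (1 - p) ^ deg g j) / (deg g j)

/-- The edge `ij` is sustainable at `g`. -/
def Sustainable [Fintype V] (α v c p δ γ : ℝ) (g : SimpleGraph V) (i j : V) : Prop :=
  (δ / (1 - δ)) * (util α v c p g i - util α v c p (g \ SimpleGraph.edge i j) i) ≥ c - γ ∧
  (δ / (1 - δ)) * (util α v c p g j - util α v c p (g \ SimpleGraph.edge i j) j) ≥ c - γ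

/-- A graph is stable if every one of its edges is sustainable at it. -/
def Stable [Fintype V] (α v c p δ γ : ℝ) (g : SimpleGraph V) : Prop :=
  ∀ i j : V, g.Adj i j → Sustainable α v c p δ γ g i j

/-- `f(n) = −(c − γ) + (δ/(1−δ))·( α·v·((1−p)^{n−1} − (1−p)^n) − (α·c/n)·(1 − (1−p)^n) )`. -/
noncomputable def fpay (α v c p δ γ : ℝ) (n : ℕ) : ℝ :=
  -(c - γ) + (δ / (1 - δ)) *
    (α * v * ((1 - p) ^ (n - 1) - (1 - p) ^ n) - (α * c / n) * (1 - (1 - p) ^ n))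

/-- `B` is a cooperation bound: `f(n) ≥ 0` for `1 ≤ n ≤ B` and `f(n) < 0` for `n > B`. -/
def IsCoopBound (α v c p δ γ : ℝ) (B : ℕ) : Prop :=
  ∀ n : ℕ, 1 ≤ n → (fpay α v c p δ γ n ≥ 0 ↔ n ≤ B)

/-- `g'` is obtainable from `g` via deviations by `{i,j}`: every edge of `g'` not in `g`
equals `ij`, and every edge of `g` not in `g'` is incident to `i` or to `j`. -/
def Obtainable (g g' : SimpleGraph V) (i j : V) : Prop :=
  (∀ x y : V, g'.Adj x y → ¬ g.Adj x y → s(x, y) = s(i, j)) ∧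
  (∀ x y : V, g.Adj x y → ¬ g'.Adj x y → x = i ∨ x = j ∨ y = i ∨ y = j)

/-- The pair `i, j` violates strong stability at `g` via `g'`. -/
def ViolatesSS [Fintype V] (α v c p δ γ : ℝ) (g g' : SimpleGraph V) (i j : V) : Prop :=
  Obtainable g g' i j ∧ g'.Adj i j ∧ ¬ g.Adj i j ∧
  Sustainable α v c p δ γ g' i j ∧
  util α v c p g' i ≥ util α v c p g i ∧
  util α v c p g' j ≥ util α v c p g j ∧
  (util α v c p g' i > util α v c p g i ∨ util α v c p g' j > util α v c p g j)

/-- A stable graph is strongly stable if no pair violates strong stability at it. -/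
def StronglyStable [Fintype V] (α v c p δ γ : ℝ) (g : SimpleGraph V) : Prop :=
  Stable α v c p δ γ g ∧
  ∀ (i j : V) (g' : SimpleGraph V), ¬ ViolatesSS α v c p δ γ g g' i j

section Helpers

lemma edge_adj_sym2 {i j x y : V} (h : (SimpleGraph.edge i j).Adj x y) : s(x, y) = s(i, j) := by
  rw [SimpleGraph.edge_adj] at h
  rcases h.1 with ⟨rfl, rfl⟩ | ⟨rfl, rfl⟩
  · rfl
  · exact Sym2.eq_swap

lemma edge_comm' (i j : V) : SimpleGraph.edge i j = SimpleGraph.edge j i := by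
  unfold SimpleGraph.edge
  rw [Sym2.eq_swap]

lemma sdiff_sup_edge {g : SimpleGraph V} {i j : V} (h : ¬ g.Adj i j) :
    (g ⊔ SimpleGraph.edge i j) \ SimpleGraph.edge i j = g := by
  ext x y
  simp only [SimpleGraph.sdiff_adj, SimpleGraph.sup_adj]
  constructor
  · rintro ⟨hxy | he, hne⟩
    · exact hxy
    · exact absurd he hne
  · intro hxy
    refine ⟨Or.inl hxy, fun he => ?_⟩
    have h2 := edge_adj_sym2 he
    rw [Sym2.eq_iff] at h2
    rcases h2 with ⟨rfl, rfl⟩ | ⟨rfl, rfl⟩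
    · exact h hxy
    · exact h hxy.symm

lemma nbr_sup_edge_self {g : SimpleGraph V} {i j : V} (hij : i ≠ j) :
    (g ⊔ SimpleGraph.edge i j).neighborSet i = insert j (g.neighborSet i) := by
  ext x
  simp only [SimpleGraph.mem_neighborSet, SimpleGraph.sup_adj, SimpleGraph.edge_adj,
    Set.mem_insert_iff]
  constructor
  · rintro (h | ⟨(⟨-, rfl⟩ | ⟨rfl, rfl⟩), hne⟩)
    · exact Or.inr h
    · exact Or.inl rfl
    · exact absurd rfl hne
  · rintro (rfl | h)
    · exact Or.inr ⟨Or.inl ⟨trivial, rfl⟩, hij⟩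
    · exact Or.inl h

lemma nbr_sup_edge_other {g : SimpleGraph V} {i j x : V} (hx1 : x ≠ i) (hx2 : x ≠ j) :
    (g ⊔ SimpleGraph.edge i j).neighborSet x = g.neighborSet x := by
  ext y
  simp only [SimpleGraph.mem_neighborSet, SimpleGraph.sup_adj, SimpleGraph.edge_adj]
  constructor
  · rintro (h | ⟨(⟨rfl, rfl⟩ | ⟨rfl, rfl⟩), hne⟩)
    · exact h
    · exact absurd rfl hx1
    · exact absurd rfl hx2
  · exact Or.inl

lemma deg_sup_edge_self [Fintype V] {g : SimpleGraph V} {i j : V} (hij : i ≠ j)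
    (h : ¬ g.Adj i j) : deg (g ⊔ SimpleGraph.edge i j) i = deg g i + 1 := by
  rw [deg, nbr_sup_edge_self hij, Set.ncard_insert_of_notMem (by simpa using h)
    (Set.toFinite _)]
  rfl

lemma deg_sup_edge_other [Fintype V] {g : SimpleGraph V} {i j x : V} (hx1 : x ≠ i) (hx2 : x ≠ j) :
    deg (g ⊔ SimpleGraph.edge i j) x = deg g x := by
  rw [deg, nbr_sup_edge_other hx1 hx2]; rfl

lemma util_gain [Fintype V] (α v c p : ℝ) {g : SimpleGraph V} {i j : V}
    (hij : i ≠ j) (h : ¬ g.Adj i j) :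
    util α v c p (g ⊔ SimpleGraph.edge i j) i - util α v c p g i =
      α * v * ((1 - p) ^ deg g i - (1 - p) ^ (deg g i + 1)) -
        α * c * (1 - (1 - p) ^ (deg g j + 1)) / (deg g j + 1) := by
  classical
  set g' := g ⊔ SimpleGraph.edge i j with hg'
  have hdi : deg g' i = deg g i + 1 := deg_sup_edge_self hij h
  have hdj : deg g' j = deg g j + 1 := by
    have he : g' = g ⊔ SimpleGraph.edge j i := by rw [hg', edge_comm']
    rw [he]
    exact deg_sup_edge_self hij.symm (fun hh => h hh.symm)
  have hfin : (g'.neighborSet i).toFinite.toFinset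
      = insert j ((g.neighborSet i).toFinite.toFinset) := by
    ext x
    rw [Set.Finite.mem_toFinset, Finset.mem_insert, Set.Finite.mem_toFinset,
      hg', nbr_sup_edge_self hij]
    exact Set.mem_insert_iff
  have hjmem : j ∉ (g.neighborSet i).toFinite.toFinset := by
    simpa [Set.Finite.mem_toFinset] using h
  have hsum : ∑ x ∈ (g'.neighborSet i).toFinite.toFinset,
      α * c * (1 - (1 - p) ^ deg g' x) / (deg g' x)
      = α * c * (1 - (1 - p) ^ (deg g j + 1)) / ((deg g j : ℝ) + 1)
        + ∑ x ∈ (g.neighborSet i).toFinite.toFinset,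
            α * c * (1 - (1 - p) ^ deg g x) / (deg g x) := by
    rw [hfin, Finset.sum_insert hjmem, hdj]
    congr 1
    · push_cast; ring
    · apply Finset.sum_congr rfl
      intro x hx
      have hxmem : x ∈ g.neighborSet i := (Set.Finite.mem_toFinset _).mp hx
      have hxi : x ≠ i := fun hh => g.irrefl (hh ▸ hxmem)
      have hxj : x ≠ j := fun hh => h (hh ▸ hxmem)
      rw [deg_sup_edge_other hxi hxj]
  rw [util, util, hsum, hdi]
  push_cast
  ring

lemma no_two_nonadj [Fintype V] {α v c p δ γ : ℝ}
    (hδ0 : 0 < δ) (hδ1 : δ < 1) (hγc : γ < c)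
    {B : ℕ} (hB : IsCoopBound α v c p δ γ B)
    {g : SimpleGraph V} (hss : StronglyStable α v c p δ γ g)
    {k : ℕ} (hk : k < B) {i j : V} (hi : deg g i = k) (hj : deg g j = k)
    (hne : i ≠ j) (hnadj : ¬ g.Adj i j) : False := by
  set g' := g ⊔ SimpleGraph.edge i j with hg'
  have hQ : 0 < δ / (1 - δ) := div_pos hδ0 (by linarith)
  have hfp : fpay α v c p δ γ (k + 1) ≥ 0 := (hB (k + 1) (by omega)).mpr (by omega)
  set D : ℝ := α * v * ((1 - p) ^ k - (1 - p) ^ (k + 1)) -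
      α * c * (1 - (1 - p) ^ (k + 1)) / ((k : ℝ) + 1) with hD
  have hfd : fpay α v c p δ γ (k + 1) = -(c - γ) + (δ / (1 - δ)) * D := by
    rw [fpay, hD]
    have h1 : k + 1 - 1 = k := rfl
    rw [h1]
    push_cast
    ring
  rw [hfd] at hfp
  have hDge : (δ / (1 - δ)) * D ≥ c - γ := by linarith
  have hDpos : 0 < D := by
    by_contra hnegD
    push_neg at hnegD
    have hle : δ / (1 - δ) * D ≤ 0 := mul_nonpos_of_nonneg_of_nonpos (le_of_lt hQ) hnegD
    linarith
  have hgaini : util α v c p g' i - util α v c p g i = D := by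
    rw [hg', util_gain α v c p hne hnadj, hi, hj]
  have hgainj : util α v c p g' j - util α v c p g j = D := by
    have he : g' = g ⊔ SimpleGraph.edge j i := by rw [hg', edge_comm']
    rw [he, util_gain α v c p hne.symm (fun hh => hnadj hh.symm), hi, hj]
  have hadj' : g'.Adj i j :=
    Or.inr (by rw [SimpleGraph.edge_adj]; exact ⟨Or.inl ⟨rfl, rfl⟩, hne⟩)
  have hsd : g' \ SimpleGraph.edge i j = g := sdiff_sup_edge hnadj
  apply hss.2 i j g'
  refine ⟨⟨?_, ?_⟩, hadj', hnadj, ⟨?_, ?_⟩, by linarith, by linarith, Or.inl (by linarith)⟩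
  · intro x y hxy hgxy
    rcases hxy with h1 | h2
    · exact absurd h1 hgxy
    · exact edge_adj_sym2 h2
  · intro x y hxy hxy'
    exact absurd (Or.inl hxy) hxy'
  · rw [hsd, hgaini]; exact hDge
  · rw [hsd, hgainj]; exact hDge

lemma card_deg_eq_le [Fintype V] {α v c p δ γ : ℝ}
    (hδ0 : 0 < δ) (hδ1 : δ < 1) (hγc : γ < c)
    {B : ℕ} (hB : IsCoopBound α v c p δ γ B)
    {g : SimpleGraph V} (hss : StronglyStable α v c p δ γ g)
    {k : ℕ} (hk : k < B) :
    (Finset.univ.filter fun x : V => deg g x = k).card ≤ k + 1 := by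
  classical
  by_contra hcard
  push_neg at hcard
  set S := Finset.univ.filter fun x : V => deg g x = k with hS
  by_cases hcl : ∀ i ∈ S, ∀ j ∈ S, i ≠ j → g.Adj i j
  · obtain ⟨i, hiS⟩ : S.Nonempty := Finset.card_pos.mp (by omega)
    have hsub : S.erase i ⊆ (g.neighborSet i).toFinite.toFinset := by
      intro x hx
      rw [Set.Finite.mem_toFinset]
      exact hcl i hiS x (Finset.mem_of_mem_erase hx)
        (Ne.symm (Finset.ne_of_mem_erase hx))
    have hle := Finset.card_le_card hsub
    have hcard2 : ((g.neighborSet i).toFinite.toFinset).card = deg g i :=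
      (Set.ncard_eq_toFinset_card _ _).symm
    have hdegi : deg g i = k := (Finset.mem_filter.mp hiS).2
    rw [Finset.card_erase_of_mem hiS, hcard2, hdegi] at hle
    omega
  · push_neg at hcl
    obtain ⟨i, hiS, j, hjS, hne, hnadj⟩ := hcl
    exact no_two_nonadj hδ0 hδ1 hγc hB hss hk
      (Finset.mem_filter.mp hiS).2 (Finset.mem_filter.mp hjS).2 hne hnadj

end Helpers

theorem strongly_stable_low_degree_bound [Fintype V] (α v c p δ γ : ℝ)
    (hα : 0 < α) (hv : 0 < v) (hc : 0 < c) (hp0 : 0 < p) (hp1 : p < 1)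
    (hδ0 : 0 < δ) (hδ1 : δ < 1) (hγ0 : 0 ≤ γ) (hγc : γ < c)
    (B : ℕ) (hB : IsCoopBound α v c p δ γ B)
    (g : SimpleGraph V) (hss : StronglyStable α v c p δ γ g) :
    (∀ k : ℕ, 0 < k → k < B →
      (Finset.univ.filter fun x : V => deg g x = k).card ≤ k + 1) ∧
    (Finset.univ.filter fun x : V => deg g x < B).card ≤ B * (B + 1) / 2 := by
  classical
  have hkey : ∀ k : ℕ, k < B →
      (Finset.univ.filter fun x : V => deg g x = k).card ≤ k + 1 :=
    fun k hk => card_deg_eq_le hδ0 hδ1 hγc hB hss hk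
  refine ⟨fun k _ hk => hkey k hk, ?_⟩
  have hcover : (Finset.univ.filter fun x : V => deg g x < B)
      = (Finset.range B).biUnion fun k => Finset.univ.filter fun x : V => deg g x = k := by
    ext x
    simp only [Finset.mem_filter, Finset.mem_biUnion, Finset.mem_range, Finset.mem_univ,
      true_and]
    constructor
    · intro h; exact ⟨deg g x, h, rfl⟩
    · rintro ⟨k, hk, rfl⟩; exact hk
  rw [hcover]
  calc ((Finset.range B).biUnion fun k =>
        Finset.univ.filter fun x : V => deg g x = k).card
      ≤ ∑ k ∈ Finset.range B,
          (Finset.univ.filter fun x : V => deg g x = k).card :=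
        Finset.card_biUnion_le
    _ ≤ ∑ k ∈ Finset.range B, (k + 1) :=
        Finset.sum_le_sum fun k hk => hkey k (Finset.mem_range.mp hk)
    _ = ∑ k ∈ Finset.range (B + 1), k := by
        rw [Finset.sum_range_succ' (fun k => k) B]
        simp
    _ = B * (B + 1) / 2 := by
        rw [Finset.sum_range_id (B + 1)]
        simp [Nat.mul_comm]
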